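/- For the generating function of splitting costs: if p_{n,k} = (a₁k + a₀)T_kT_{n−k}/((n−1)T_n) with T_n = [z^n]T(z) and T(z) = zΦ(T(z)), then multiplying the recurrence μ_n = ∑_{k=1}^{n−1} p_{n,k}(μ_k + μ_{n−k}) + r_n (n ≥ 2) by (n−1)T_n z^n and summing over n ≥ 2 yields the differential equation z·M'(z) − M(z) = a₁[z·M'(z)·T(z) + z·T'(z)·M(z)] + 2a₀·M(z)·T(z) + R(z), where M(z) := ∑_{n≥1} μ_n T_n z^n and R(z) := ∑_{n≥2}(n−1)T_n r_n z^n. (Formal power series identity.) -/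

import Mathlib

/-!
Multiplied by `(n - 1) T_n`, the recurrence becomes a division-free identity between `n`-th
coefficients. With `T_0 := 0` the sum over `1 ≤ k < n` extends to the whole antidiagonal, i.e. a
Cauchy product, and symmetrizing the weight `a₁ k + a₀` under `k ↔ n - k` produces
`a₁ (z M' T + z T' M) + 2 a₀ M T`; the factor `n` on the left is the coefficient of `z M'`.
-/

open Finset PowerSeries

theorem Finset.Nat.sum_Ico_one_eq_sum_antidiagonal {M : Type*} [AddCommMonoid M]
    (F : ℕ → ℕ → M) (n : ℕ) (h0 : F 0 n = 0) (hn : F n 0 = 0) :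
    ∑ k ∈ Ico 1 n, F k (n - k) = ∑ p ∈ antidiagonal n, F p.1 p.2 := by
  rw [Nat.sum_antidiagonal_eq_sum_range_succ, range_eq_Ico,
    sum_eq_sum_Ico_succ_bot n.succ_pos, Nat.sub_zero, h0, zero_add]
  cases n with
  | zero => simp
  | succ m =>
    rw [zero_add, Nat.succ_eq_add_one, sum_Ico_succ_top (by omega : 1 ≤ m + 1), Nat.sub_self, hn,
      add_zero]

theorem Finset.Nat.sum_antidiagonal_affine_mul_add {R : Type*} [CommRing R] (a₀ a₁ : R)
    (t μ : ℕ → R) (n : ℕ) :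
    ∑ p ∈ antidiagonal n, (a₁ * p.1 + a₀) * t p.1 * t p.2 * (μ p.1 + μ p.2) =
      a₁ * (∑ p ∈ antidiagonal n, p.1 * (μ p.1 * t p.1) * t p.2 +
        ∑ p ∈ antidiagonal n, p.1 * t p.1 * (μ p.2 * t p.2)) +
      2 * a₀ * ∑ p ∈ antidiagonal n, μ p.1 * t p.1 * t p.2 := by
  have hswap : ∑ p ∈ antidiagonal n, μ p.2 * t p.2 * t p.1 =
      ∑ p ∈ antidiagonal n, μ p.1 * t p.1 * t p.2 :=
    Nat.sum_antidiagonal_swap (f := fun p => μ p.1 * t p.1 * t p.2)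
  have hexpand : ∑ p ∈ antidiagonal n, (a₁ * p.1 + a₀) * t p.1 * t p.2 * (μ p.1 + μ p.2) =
      a₁ * ∑ p ∈ antidiagonal n, p.1 * (μ p.1 * t p.1) * t p.2 +
        a₁ * ∑ p ∈ antidiagonal n, p.1 * t p.1 * (μ p.2 * t p.2) +
        a₀ * ∑ p ∈ antidiagonal n, μ p.1 * t p.1 * t p.2 +
        a₀ * ∑ p ∈ antidiagonal n, μ p.2 * t p.2 * t p.1 := by
    simp only [mul_sum, ← sum_add_distrib]
    exact sum_congr rfl fun p _ => by ring
  rw [hexpand, hswap]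
  ring

theorem PowerSeries.X_mul_derivativeFun_mk {R : Type*} [CommSemiring R] (f : ℕ → R) :
    X * (mk f).derivativeFun = mk fun n => n * f n := by
  ext (_ | n)
  · simp
  · rw [coeff_succ_X_mul, coeff_mk]
    exact (coeff_derivative _ n).trans (by push_cast; rw [coeff_mk]; ring)

theorem mul_eq_sum_add_mul_of_eq_sum_div_add {K ι : Type*} [Field K] {s : Finset ι}
    {c x : ι → K} {D m r : K} (hD : D ≠ 0) (h : m = ∑ i ∈ s, c i / D * x i + r) :
    D * m = ∑ i ∈ s, c i * x i + D * r := by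
  rw [h, mul_add, mul_sum]
  congr 1
  exact sum_congr rfl fun i _ => by field_simp

theorem PowerSeries.X_mul_derivativeFun_sub_eq_of_coeff_eq {R : Type*} [CommRing R]
    (a₀ a₁ : R) (t μ ρ : ℕ → R)
    (h : ∀ n : ℕ, ((n : R) - 1) * t n * μ n =
      ∑ p ∈ antidiagonal n, (a₁ * p.1 + a₀) * t p.1 * t p.2 * (μ p.1 + μ p.2) + ρ n) :
    X * (mk fun n => μ n * t n).derivativeFun - mk (fun n => μ n * t n) =
      C a₁ * (X * (mk fun n => μ n * t n).derivativeFun * mk t +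
          X * (mk t).derivativeFun * mk fun n => μ n * t n) +
        C (2 * a₀) * (mk fun n => μ n * t n) * mk t + mk ρ := by
  rw [X_mul_derivativeFun_mk, X_mul_derivativeFun_mk]
  ext n
  rw [mul_assoc (C _)]
  simp only [map_sub, map_add, coeff_C_mul]
  simp only [coeff_mul, coeff_mk]
  rw [← Nat.sum_antidiagonal_affine_mul_add, ← h]
  ring

theorem sub_one_mul_mul_eq_of_splitting_rec (a₀ a₁ : ℝ) (T μ r t : ℕ → ℝ)
    (hT : ∀ n : ℕ, 1 ≤ n → T n ≠ 0)
    (hrec : ∀ n : ℕ, 2 ≤ n →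
      μ n = (∑ k ∈ Ico 1 n,
          (a₁ * k + a₀) * T k * T (n - k) / (((n : ℝ) - 1) * T n) *
            (μ k + μ (n - k))) + r n)
    (ht : ∀ n, t n = if n = 0 then 0 else T n) (n : ℕ) :
    ((n : ℝ) - 1) * t n * μ n =
      ∑ p ∈ antidiagonal n, (a₁ * p.1 + a₀) * t p.1 * t p.2 * (μ p.1 + μ p.2) +
        if n < 2 then 0 else ((n : ℝ) - 1) * T n * r n := by
  rcases lt_or_ge n 2 with hn | hn
  · interval_cases n <;> simp [ht, Nat.antidiagonal_succ]
  have hD : ((n : ℝ) - 1) * T n ≠ 0 := by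
    have : (2 : ℝ) ≤ n := by exact_mod_cast hn
    exact mul_ne_zero (by linarith) (hT n (by omega))
  rw [ht n, if_neg (by omega), if_neg (by omega),
    mul_eq_sum_add_mul_of_eq_sum_div_add hD (hrec n hn),
    ← Nat.sum_Ico_one_eq_sum_antidiagonal
      (fun i j => (a₁ * i + a₀) * t i * t j * (μ i + μ j)) n (by simp [ht]) (by simp [ht])]
  congr 1
  refine sum_congr rfl fun k hk => ?_
  rw [mem_Ico] at hk
  rw [ht, ht, if_neg (by omega), if_neg (by omega)]

/-- Translating the moment recurrence μ_n = ∑ p_{n,k}(μ_k + μ_{n−k}) + r_n,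
with p_{n,k} = (a₁k + a₀)T_k T_{n−k}/((n−1)T_n), into the formal power series
differential equation z·M′(z) − M(z)
  = a₁[z·M′(z)·T(z) + z·T′(z)·M(z)] + 2a₀·M(z)·T(z) + R(z). -/
theorem stmt18 (a₀ a₁ : ℝ) (T μ r : ℕ → ℝ)
    (hT : ∀ n : ℕ, 1 ≤ n → T n ≠ 0)
    (hrec : ∀ n : ℕ, 2 ≤ n →
      μ n = (∑ k ∈ Ico 1 n,
          (a₁ * k + a₀) * T k * T (n - k) / (((n : ℝ) - 1) * T n) *
            (μ k + μ (n - k))) + r n) :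
    (PowerSeries.X * PowerSeries.derivativeFun
        (PowerSeries.mk fun n : ℕ => if n = 0 then 0 else μ n * T n) -
      PowerSeries.mk fun n : ℕ => if n = 0 then 0 else μ n * T n) =
    (PowerSeries.C a₁) *
        (PowerSeries.X * PowerSeries.derivativeFun
            (PowerSeries.mk fun n : ℕ => if n = 0 then 0 else μ n * T n) *
            (PowerSeries.mk fun n : ℕ => if n = 0 then 0 else T n) +
          PowerSeries.X * PowerSeries.derivativeFun
            (PowerSeries.mk fun n : ℕ => if n = 0 then 0 else T n) *
            (PowerSeries.mk fun n : ℕ => if n = 0 then 0 else μ n * T n)) +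
      (PowerSeries.C (2 * a₀)) *
        (PowerSeries.mk fun n : ℕ => if n = 0 then 0 else μ n * T n) *
        (PowerSeries.mk fun n : ℕ => if n = 0 then 0 else T n) +
      PowerSeries.mk fun n : ℕ =>
        if n < 2 then 0 else ((n : ℝ) - 1) * T n * r n := by
  have hμt : (fun n : ℕ => if n = 0 then 0 else μ n * T n) =
      fun n => μ n * if n = 0 then 0 else T n := by
    funext n; split_ifs <;> simp
  rw [hμt]
  exact X_mul_derivativeFun_sub_eq_of_coeff_eq _ _ _ _ _
    (sub_one_mul_mul_eq_of_splitting_rec a₀ a₁ T μ r _ hT hrec fun _ => rfl)
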